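/- arXiv:2603.26297 — 2 statements merged into one kernel-verified Lean document; each statement's English description precedes it below -/
import Mathlib

section
/- Let x ∈ ℝⁿ be a nonzero vector with non-negative entries, and let α(x) = (min of the nonzero entries of x)/(max of the nonzero entries of x). Then (2α(x)^{1/2}/(1+α(x))) · ‖x‖₀^{1/2} ≤ ‖x‖₁/‖x‖₂. -/
/-!
On the support `s` of `x`, every entry lies in `[m, M]`, the extreme nonzero entries, so
`(xᵢ - m)(xᵢ - M) ≤ 0`, i.e. `xᵢ² + mM ≤ (m + M) xᵢ`. Summing gives
`‖x‖₂² + |s| mM ≤ (m + M) ‖x‖₁`, and AM–GM on the left-hand side gives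
`2 √(|s| mM) ‖x‖₂ ≤ (m + M) ‖x‖₁`. Finally `2√α / (1 + α) = 2√(mM) / (m + M)` for `α = m / M`.
-/

open Finset Real

section ReverseCauchySchwarz

variable {ι : Type*} (s : Finset ι) (f : ι → ℝ) {m M : ℝ}

lemma sum_sq_add_card_mul_le (h : ∀ i ∈ s, m ≤ f i ∧ f i ≤ M) :
    ∑ i ∈ s, f i ^ 2 + #s * (m * M) ≤ (m + M) * ∑ i ∈ s, f i :=
  calc ∑ i ∈ s, f i ^ 2 + #s * (m * M) = ∑ i ∈ s, (f i ^ 2 + m * M) := by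
        rw [sum_add_distrib, sum_const, nsmul_eq_mul]
    _ ≤ ∑ i ∈ s, (m + M) * f i :=
        sum_le_sum fun i hi => by nlinarith [h i hi]
    _ = (m + M) * ∑ i ∈ s, f i := (mul_sum _ _ _).symm

lemma two_mul_sqrt_card_mul_mul_sqrt_sum_sq_le (hm : 0 ≤ m) (hM : 0 ≤ M)
    (h : ∀ i ∈ s, m ≤ f i ∧ f i ≤ M) :
    2 * √(#s * (m * M)) * √(∑ i ∈ s, f i ^ 2) ≤ (m + M) * ∑ i ∈ s, f i :=
  calc 2 * √(#s * (m * M)) * √(∑ i ∈ s, f i ^ 2)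
      ≤ √(#s * (m * M)) ^ 2 + √(∑ i ∈ s, f i ^ 2) ^ 2 := two_mul_le_add_sq _ _
    _ = ∑ i ∈ s, f i ^ 2 + #s * (m * M) := by
        rw [sq_sqrt (by positivity), sq_sqrt (sum_nonneg fun i _ => sq_nonneg (f i))]
        ring
    _ ≤ (m + M) * ∑ i ∈ s, f i := sum_sq_add_card_mul_le s f h

lemma two_mul_sqrt_mul_div_add_mul_sqrt_card_le (hs : s.Nonempty) (hm : 0 < m)
    (h : ∀ i ∈ s, m ≤ f i ∧ f i ≤ M) :
    2 * √(m * M) / (m + M) * √(#s : ℝ) ≤ (∑ i ∈ s, f i) / √(∑ i ∈ s, f i ^ 2) := by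
  obtain ⟨j, hj⟩ := hs
  have hM : 0 < M := hm.trans_le ((h j hj).1.trans (h j hj).2)
  have hnorm : 0 < √(∑ i ∈ s, f i ^ 2) :=
    sqrt_pos.mpr (sum_pos (fun i hi => pow_pos (hm.trans_le (h i hi).1) 2) ⟨j, hj⟩)
  rw [div_mul_eq_mul_div, div_le_div_iff₀ (by positivity) hnorm, mul_assoc 2,
    ← sqrt_mul (by positivity), mul_comm (m * M)]
  linarith [two_mul_sqrt_card_mul_mul_sqrt_sum_sq_le s f hm.le hM.le h]

end ReverseCauchySchwarz

lemma two_mul_sqrt_div_div_one_add_div {m M : ℝ} (hm : 0 ≤ m) (hM : 0 < M) :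
    2 * √(m / M) / (1 + m / M) = 2 * √(m * M) / (m + M) := by
  have hsM : √M ^ 2 = M := sq_sqrt hM.le
  have hsqrtM : 0 < √M := sqrt_pos.mpr hM
  rw [sqrt_div hm, sqrt_mul hm]
  field_simp
  rw [hsM]
  ring

section NonzeroValues

variable {ι : Type*} [Finite ι] (x : ι → ℝ)

lemma finite_setOf_exists_ne_zero_eq : {r : ℝ | ∃ i, x i ≠ 0 ∧ x i = r}.Finite :=
  (Set.finite_range x).subset fun _ ⟨i, _, hi⟩ => ⟨i, hi⟩

lemma sInf_le_and_le_sSup_of_ne_zero {i : ι} (hi : x i ≠ 0) :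
    sInf {r : ℝ | ∃ i, x i ≠ 0 ∧ x i = r} ≤ x i ∧ x i ≤ sSup {r : ℝ | ∃ i, x i ≠ 0 ∧ x i = r} :=
  ⟨csInf_le (finite_setOf_exists_ne_zero_eq x).bddBelow ⟨i, hi, rfl⟩,
    le_csSup (finite_setOf_exists_ne_zero_eq x).bddAbove ⟨i, hi, rfl⟩⟩

lemma sInf_pos_of_nonneg_of_ne_zero (hnn : ∀ i, 0 ≤ x i) {i : ι} (hi : x i ≠ 0) :
    0 < sInf {r : ℝ | ∃ i, x i ≠ 0 ∧ x i = r} := by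
  have hne : {r : ℝ | ∃ i, x i ≠ 0 ∧ x i = r}.Nonempty := ⟨x i, i, hi, rfl⟩
  obtain ⟨j, hj, hjeq⟩ := hne.csInf_mem (finite_setOf_exists_ne_zero_eq x)
  exact hjeq ▸ (hnn j).lt_of_ne' hj

end NonzeroValues

theorem stmt3_general {n : ℕ} (x : Fin n → ℝ) (hnn : ∀ i, 0 ≤ x i)
    (α : ℝ)
    (hα : α = sInf {r : ℝ | ∃ i, x i ≠ 0 ∧ x i = r} / sSup {r : ℝ | ∃ i, x i ≠ 0 ∧ x i = r}) :
    (2 * Real.sqrt α / (1 + α)) * Real.sqrt (({i | x i ≠ 0} : Set (Fin n)).ncard) ≤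
      (∑ i, |x i|) / Real.sqrt (∑ i, (x i) ^ 2) := by
  classical
  set s := univ.filter fun i => x i ≠ 0
  have hcard : ({i | x i ≠ 0} : Set (Fin n)).ncard = #s := by
    rw [← Set.ncard_coe_finset, coe_filter_univ]
  rw [hcard]
  rcases s.eq_empty_or_nonempty with hs | ⟨j, hj⟩
  · rw [hs, card_empty, Nat.cast_zero, sqrt_zero, mul_zero]
    positivity
  set m := sInf {r : ℝ | ∃ i, x i ≠ 0 ∧ x i = r}
  set M := sSup {r : ℝ | ∃ i, x i ≠ 0 ∧ x i = r}
  have hbounds : ∀ i ∈ s, m ≤ x i ∧ x i ≤ M := fun i hi =>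
    sInf_le_and_le_sSup_of_ne_zero x (mem_filter.mp hi).2
  have hm : 0 < m := sInf_pos_of_nonneg_of_ne_zero x hnn (mem_filter.mp hj).2
  have hM : 0 < M := hm.trans_le ((hbounds j hj).1.trans (hbounds j hj).2)
  have hsum : ∑ i, |x i| = ∑ i ∈ s, x i := by
    rw [sum_filter_of_ne fun i _ h => by simpa using h]
    exact sum_congr rfl fun i _ => abs_of_nonneg (hnn i)
  have hsq : ∑ i, x i ^ 2 = ∑ i ∈ s, x i ^ 2 :=
    (sum_filter_of_ne fun i _ h => by simpa using h).symm
  rw [hsum, hsq, hα, two_mul_sqrt_div_div_one_add_div hm.le hM]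
  exact two_mul_sqrt_mul_div_add_mul_sqrt_card_le s x ⟨j, hj⟩ hm hbounds

/-- Lemma 3.3 of Yin–Esser–Xin 2014. For a nonzero vector `x ∈ ℝⁿ`
with non-negative entries, letting `α(x)` be the ratio of the smallest nonzero entry to
the largest entry, `(2√α/(1+α))·‖x‖₀^{1/2} ≤ ‖x‖₁/‖x‖₂`. -/
theorem stmt3 {n : ℕ} (x : Fin n → ℝ) (hx : x ≠ 0) (hnn : ∀ i, 0 ≤ x i)
    (α : ℝ)
    (hα : α = sInf {r : ℝ | ∃ i, x i ≠ 0 ∧ x i = r} / sSup {r : ℝ | ∃ i, x i ≠ 0 ∧ x i = r}) :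
    (2 * Real.sqrt α / (1 + α)) * Real.sqrt (({i | x i ≠ 0} : Set (Fin n)).ncard) ≤
      (∑ i, |x i|) / Real.sqrt (∑ i, (x i) ^ 2) :=
  stmt3_general x hnn α hα
end

section
/- Let B be a nonzero symmetric positive semi-definite n×n real matrix. Then tr(B)/‖B‖₂ ≥ α(B)^{1/2} · rank(B)^{1/2} · (2/(1+α(B))), where ‖B‖₂ is the Frobenius norm and α(B) is the ratio of the smallest nonzero eigenvalue to the largest eigenvalue of B. In particular tr(B)/‖B‖₂ ≥ α(B)^{1/2} rank(B)^{1/2} (up to the factor 2/(1+α(B)) ≥ 1 when α(B) ≤ 1). -/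
/-!
By the spectral theorem, trace, squared Frobenius norm and rank of `B` are the sum `S`, the sum of
squares `Q` and the number `r` of nonzero entries of its eigenvalue vector. The nonzero
eigenvalues lie in `[m, M]` with `0 < m`, so summing `(x - m) (x - M) ≤ 0` over them gives
`Q + r m M ≤ (m + M) S`; with AM-GM, `4 (r m M) Q ≤ (Q + r m M)²`, this is the Pólya–Szegő
inequality `4 m M r Q ≤ (m + M)² S²`, i.e. the claim with `α = m / M`.
-/

open Finset

namespace Finset

variable {ι : Type*} {s : Finset ι} {x : ι → ℝ} {m M : ℝ}

theorem sum_sq_add_card_mul_le (hx : ∀ i ∈ s, m ≤ x i ∧ x i ≤ M) :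
    ∑ i ∈ s, x i ^ 2 + #s * (m * M) ≤ (m + M) * ∑ i ∈ s, x i := by
  have h : ∑ i ∈ s, (x i - m) * (x i - M) ≤ 0 :=
    sum_nonpos fun i hi ↦
      mul_nonpos_of_nonneg_of_nonpos (by linarith [hx i hi]) (by linarith [hx i hi])
  have expand : ∑ i ∈ s, (x i - m) * (x i - M)
      = ∑ i ∈ s, x i ^ 2 + #s * (m * M) - (m + M) * ∑ i ∈ s, x i := by
    simp only [show ∀ i, (x i - m) * (x i - M) = x i ^ 2 - (m + M) * x i + m * M from
      fun i ↦ by ring, sum_add_distrib, sum_sub_distrib, ← mul_sum, sum_const, nsmul_eq_mul]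
    ring
  linarith

theorem four_mul_mul_card_mul_sum_sq_le (hm : 0 ≤ m) (hmM : m ≤ M)
    (hx : ∀ i ∈ s, m ≤ x i ∧ x i ≤ M) :
    4 * (m * M) * #s * ∑ i ∈ s, x i ^ 2 ≤ ((m + M) * ∑ i ∈ s, x i) ^ 2 := by
  have hb : 0 ≤ #s * (m * M) := by have := hm.trans hmM; positivity
  have ha : 0 ≤ ∑ i ∈ s, x i ^ 2 := sum_nonneg fun i _ ↦ sq_nonneg _
  have h := sum_sq_add_card_mul_le hx
  nlinarith [sq_nonneg (∑ i ∈ s, x i ^ 2 - #s * (m * M))]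

theorem sqrt_mul_sqrt_card_mul_le_sum_div_sqrt_sum_sq (hm : 0 < m) (hmM : m ≤ M)
    (hs : s.Nonempty) (hx : ∀ i ∈ s, m ≤ x i ∧ x i ≤ M) :
    √(m / M) * √(#s : ℝ) * (2 / (1 + m / M)) ≤ (∑ i ∈ s, x i) / √(∑ i ∈ s, x i ^ 2) := by
  have hM : 0 < M := hm.trans_le hmM
  have hQ : 0 < ∑ i ∈ s, x i ^ 2 :=
    sum_pos (fun i hi ↦ pow_pos (hm.trans_le (hx i hi).1) 2) hs
  have hS : 0 ≤ ∑ i ∈ s, x i := sum_nonneg fun i hi ↦ hm.le.trans (hx i hi).1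
  have hlhs : √(m / M) * √(#s : ℝ) * (2 / (1 + m / M)) * √(∑ i ∈ s, x i ^ 2)
      = √(4 * (m * M) * #s * ∑ i ∈ s, x i ^ 2) / (m + M) := by
    have hcoeff : m / M * (2 / (1 + m / M)) ^ 2 = 4 * (m * M) / (m + M) ^ 2 := by
      field_simp
      ring
    calc √(m / M) * √(#s : ℝ) * (2 / (1 + m / M)) * √(∑ i ∈ s, x i ^ 2)
        = √(m / M * (2 / (1 + m / M)) ^ 2 * #s * ∑ i ∈ s, x i ^ 2) := by
          rw [Real.sqrt_mul (by positivity), Real.sqrt_mul (by positivity),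
            Real.sqrt_mul (by positivity), Real.sqrt_sq (by positivity)]
          ring
      _ = √((4 * (m * M) * #s * ∑ i ∈ s, x i ^ 2) / (m + M) ^ 2) := by
          rw [hcoeff]
          congr 1
          ring
      _ = √(4 * (m * M) * #s * ∑ i ∈ s, x i ^ 2) / (m + M) := by
          rw [Real.sqrt_div' _ (by positivity), Real.sqrt_sq (by positivity)]
  rw [le_div_iff₀ (Real.sqrt_pos.2 hQ), hlhs, div_le_iff₀ (by linarith),
    Real.sqrt_le_iff, mul_comm (∑ i ∈ s, x i)]
  exact ⟨by positivity, four_mul_mul_card_mul_sum_sq_le hm.le hmM hx⟩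

end Finset

theorem sqrt_ratio_mul_sqrt_card_mul_le_sum_div_sqrt_sum_sq {ι : Type*} [Fintype ι]
    {f : ι → ℝ} (hf : ∀ i, 0 ≤ f i) (hf0 : f ≠ 0) :
    √(sInf {r : ℝ | r ≠ 0 ∧ ∃ i, f i = r} / sSup {r : ℝ | ∃ i, f i = r}) *
        √(Fintype.card {i // f i ≠ 0} : ℝ) *
        (2 / (1 + sInf {r : ℝ | r ≠ 0 ∧ ∃ i, f i = r} / sSup {r : ℝ | ∃ i, f i = r})) ≤
      (∑ i, f i) / √(∑ i, f i ^ 2) := by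
  classical
  set T := {r : ℝ | r ≠ 0 ∧ ∃ i, f i = r}
  obtain ⟨i₀, hi₀⟩ := Function.ne_iff.mp hf0
  have hT : T.Finite := (Set.finite_range f).subset fun r ⟨_, i, hi⟩ ↦ ⟨i, hi⟩
  have hm : 0 < sInf T := by
    obtain ⟨h0, i, hi⟩ : sInf T ∈ T := Set.Nonempty.csInf_mem ⟨f i₀, hi₀, i₀, rfl⟩ hT
    exact hi ▸ (hf i).lt_of_ne' (hi ▸ h0)
  have hx : ∀ i ∈ univ.filter (f · ≠ 0), sInf T ≤ f i ∧ f i ≤ sSup (Set.range f) :=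
    fun i hi ↦ ⟨csInf_le hT.bddBelow ⟨(mem_filter.1 hi).2, i, rfl⟩,
      le_csSup (Set.finite_range f).bddAbove ⟨i, rfl⟩⟩
  have hi₀s : i₀ ∈ univ.filter (f · ≠ 0) := mem_filter.2 ⟨mem_univ _, hi₀⟩
  have key := sqrt_mul_sqrt_card_mul_le_sum_div_sqrt_sum_sq hm
    ((hx i₀ hi₀s).1.trans (hx i₀ hi₀s).2) ⟨i₀, hi₀s⟩ hx
  rwa [sum_filter_ne_zero, sum_filter_of_ne fun i _ h ↦ by simpa using h,
    ← Fintype.card_subtype] at key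

namespace Matrix.IsHermitian

variable {𝕜 n : Type*} [RCLike 𝕜] [Fintype n] [DecidableEq n] {A : Matrix n n 𝕜}

theorem trace_mul_self_eq_sum_sq_eigenvalues (hA : A.IsHermitian) :
    (A * A).trace = ∑ i, ((hA.eigenvalues i ^ 2 : ℝ) : 𝕜) := by
  conv_lhs => rw [hA.spectral_theorem, ← map_mul, Unitary.conjStarAlgAut_apply,
    trace_mul_cycle, Unitary.coe_star_mul_self, one_mul, diagonal_mul_diagonal, trace_diagonal]
  simp [sq]

theorem sum_sum_sq_apply_eq_sum_sq_eigenvalues {A : Matrix n n ℝ} (hA : A.IsHermitian) :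
    ∑ i, ∑ j, A i j ^ 2 = ∑ i, hA.eigenvalues i ^ 2 := by
  have h := hA.trace_mul_self_eq_sum_sq_eigenvalues
  simp only [RCLike.ofReal_real_eq_id, id, trace, diag, mul_apply] at h
  rw [← h]
  refine sum_congr rfl fun i _ ↦ sum_congr rfl fun j _ ↦ ?_
  rw [sq, ← hA.apply i j, star_trivial]

end Matrix.IsHermitian

/-- For a nonzero symmetric PSD matrix `B`,
`tr(B)/‖B‖₂ ≥ α(B)^{1/2}·rank(B)^{1/2}·(2/(1+α(B)))`, where `‖B‖₂` is the Frobenius norm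
and `α(B)` is the ratio of the smallest nonzero eigenvalue to the largest eigenvalue. -/
theorem stmt4 {n : ℕ} (B : Matrix (Fin n) (Fin n) ℝ)
    (hB : B.PosSemidef) (hB0 : B ≠ 0) (α : ℝ)
    (hα : α = sInf {r : ℝ | r ≠ 0 ∧ ∃ i, hB.1.eigenvalues i = r} /
        sSup {r : ℝ | ∃ i, hB.1.eigenvalues i = r}) :
    Real.sqrt α * Real.sqrt (B.rank) * (2 / (1 + α)) ≤
      B.trace / Real.sqrt (∑ i, ∑ j, (B i j) ^ 2) := by
  subst hα
  have heig : hB.1.eigenvalues ≠ 0 := fun h ↦ hB0 (hB.1.eigenvalues_eq_zero_iff.1 h)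
  rw [hB.1.trace_eq_sum_eigenvalues, hB.1.sum_sum_sq_apply_eq_sum_sq_eigenvalues,
    hB.1.rank_eq_card_non_zero_eigs]
  exact sqrt_ratio_mul_sqrt_card_mul_le_sum_div_sqrt_sum_sq hB.eigenvalues_nonneg heig
end
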